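/- The minimal M_2-obstructions, where M_2 = [[0,0],[*,0]], are exactly: the digon (two vertices with arcs in both directions), the induced directed path of length 2, the three-vertex tournaments (the directed 3-cycle and the transitive tournament), and no others. -/

import Mathlib

/-- A pattern: an `m × m` matrix over `{0,1,*}`; `none` is `*`,
`some false` is `0`, `some true` is `1`. -/
abbrev Pattern (m : ℕ) := Fin m → Fin m → Option Bool

/-- `f` is an `M`-partition of the digraph with arc relation `A`. -/
def IsMPartition {m : ℕ} (M : Pattern m) {V : Type*} (A : V → V → Prop)
    (f : V → Fin m) : Prop :=
  ∀ u v : V, u ≠ v →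
    (M (f u) (f v) = some false → ¬ A u v) ∧
    (M (f u) (f v) = some true → A u v)

/-- The digraph with arc relation `A` admits an `M`-partition. -/
def MPartitionable {m : ℕ} (M : Pattern m) {V : Type*} (A : V → V → Prop) : Prop :=
  ∃ f : V → Fin m, IsMPartition M A f

/-- The induced subdigraph on a set `S` of vertices. -/
def Restrict {V : Type*} (A : V → V → Prop) (S : Set V) : S → S → Prop :=
  fun x y => A x y

/-- A (finite) digraph is a minimal `M`-obstruction if it is not
`M`-partitionable but every proper induced subdigraph is. -/
def IsMinimalObstruction {m : ℕ} (M : Pattern m) {V : Type*} [Finite V]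
    (A : V → V → Prop) : Prop :=
  ¬ MPartitionable M A ∧
    ∀ S : Set V, S ≠ Set.univ → MPartitionable M (Restrict A S)

/-- Isomorphism of digraphs. -/
def DigraphIso {V W : Type*} (A : V → V → Prop) (B : W → W → Prop) : Prop :=
  ∃ e : V ≃ W, ∀ u v : V, A u v ↔ B (e u) (e v)

/-- `B` occurs as an induced subdigraph of `A`. -/
def HasInducedSub {V W : Type*} (A : V → V → Prop) (B : W → W → Prop) : Prop :=
  ∃ g : W → V, Function.Injective g ∧ ∀ u v : W, B u v ↔ A (g u) (g v)

/-- The complement of a digraph. -/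
def DigraphCompl {V : Type*} (A : V → V → Prop) : V → V → Prop :=
  fun x y => x ≠ y ∧ ¬ A x y

/-- The dual (reverse) of a digraph. -/
def Rev {V : Type*} (A : V → V → Prop) : V → V → Prop :=
  fun x y => A y x

/-- The pattern obtained by exchanging `0` and `1` entries. -/
def PatternCompl {m : ℕ} (M : Pattern m) : Pattern m :=
  fun i j => (M i j).map (fun b => !b)

/-- The transpose of a pattern. -/
def PatternTranspose {m : ℕ} (M : Pattern m) : Pattern m :=
  fun i j => M j i

def M2 : Pattern 2 := fun i j => if (i : ℕ) = 1 ∧ (j : ℕ) = 0 then none else some false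
def Digon : Fin 2 → Fin 2 → Prop := fun x y => x ≠ y
def DirPath2 : Fin 3 → Fin 3 → Prop := fun x y => (x = 0 ∧ y = 1) ∨ (x = 1 ∧ y = 2)
def DirC3 : Fin 3 → Fin 3 → Prop := fun x y => (x = 0 ∧ y = 1) ∨ (x = 1 ∧ y = 2) ∨ (x = 2 ∧ y = 0)
def TransTour3 : Fin 3 → Fin 3 → Prop := fun x y => (x = 0 ∧ y = 1) ∨ (x = 0 ∧ y = 2) ∨ (x = 1 ∧ y = 2)

/-!
An arc between distinct vertices forces its tail into `V₂` and its head into `V₁`, so a digraph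
is `M₂`-partitionable iff no vertex is both a head and a tail, i.e. iff it has no walk
`u → v → w` with `u ≠ v ≠ w`. The minimal obstructions are therefore the digraphs spanned by
every such walk. If `u = w` this is the digon; otherwise minimality rules out the arcs `v → u`,
`w → v` and a digon on `{u, w}`, and the remaining choices for the pair `u, w` give the induced
path, the directed triangle and the transitive tournament.
-/

/-- A walk `u → v → w` along two arcs; `u = w` is allowed (a digon). -/
def IsTwoWalk {V : Type*} (A : V → V → Prop) (u v w : V) : Prop :=
  u ≠ v ∧ v ≠ w ∧ A u v ∧ A v w

section TwoWalk

variable {V W : Type*} {A : V → V → Prop}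

theorem isTwoWalk_restrict_iff {S : Set V} {a b c : S} :
    IsTwoWalk (Restrict A S) a b c ↔ IsTwoWalk A a b c := by
  simp only [IsTwoWalk, Restrict, ne_eq, Subtype.ext_iff]

theorem isTwoWalk_equiv_iff {B : W → W → Prop} {e : V ≃ W} (he : ∀ u v, A u v ↔ B (e u) (e v))
    {u v w : V} : IsTwoWalk B (e u) (e v) (e w) ↔ IsTwoWalk A u v w := by
  simp only [IsTwoWalk, he, e.injective.ne_iff]

end TwoWalk

theorem M2_eq_some_false_iff : ∀ i j : Fin 2, M2 i j = some false ↔ ¬ (i = 1 ∧ j = 0) := by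
  decide

theorem M2_ne_some_true : ∀ i j : Fin 2, M2 i j ≠ some true := by
  decide

theorem isMPartition_M2_iff {V : Type*} (A : V → V → Prop) (f : V → Fin 2) :
    IsMPartition M2 A f ↔ ∀ u v, u ≠ v → A u v → f u = 1 ∧ f v = 0 := by
  simp only [IsMPartition, M2_eq_some_false_iff, M2_ne_some_true, false_imp_iff, and_true,
    not_imp_not]

theorem mPartitionable_M2_iff {V : Type*} (A : V → V → Prop) :
    MPartitionable M2 A ↔ ¬ ∃ u v w, IsTwoWalk A u v w := by
  constructor
  · rintro ⟨f, hf⟩ ⟨u, v, w, huv, hvw, huv', hvw'⟩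
    rw [isMPartition_M2_iff] at hf
    have hv₀ : f v = 0 := (hf u v huv huv').2
    have hv₁ : f v = 1 := (hf v w hvw hvw').1
    exact absurd (hv₀.symm.trans hv₁) (by decide)
  · intro hno
    classical
    refine ⟨fun v => if ∃ w, w ≠ v ∧ A v w then 1 else 0, (isMPartition_M2_iff A _).2 ?_⟩
    intro u v huv h
    refine ⟨if_pos ⟨v, huv.symm, h⟩, if_neg ?_⟩
    rintro ⟨w, hwv, hvw⟩
    exact hno ⟨u, v, w, huv, hwv.symm, h, hvw⟩

theorem isMinimalObstruction_M2_iff {V : Type*} [Finite V] (A : V → V → Prop) :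
    IsMinimalObstruction M2 A ↔
      (∃ u v w, IsTwoWalk A u v w) ∧
        ∀ u v w, IsTwoWalk A u v w → ({u, v, w} : Set V) = Set.univ := by
  simp only [IsMinimalObstruction, mPartitionable_M2_iff, not_not]
  refine and_congr_right fun _ => ⟨fun hmin u v w huvw => ?_, fun hspan S hS => ?_⟩
  · by_contra hS
    refine hmin _ hS ⟨⟨u, by simp⟩, ⟨v, by simp⟩, ⟨w, by simp⟩, ?_⟩
    exact isTwoWalk_restrict_iff.2 huvw
  · rintro ⟨a, b, c, habc⟩
    refine hS (Set.eq_univ_of_univ_subset ?_)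
    rw [← hspan a b c (isTwoWalk_restrict_iff.1 habc)]
    simp [Set.insert_subset_iff]

theorem DigraphIso.isMinimalObstruction_M2 {V W : Type*} [Finite V] [Finite W]
    {A : V → V → Prop} {B : W → W → Prop} (h : DigraphIso A B)
    (hB : IsMinimalObstruction M2 B) : IsMinimalObstruction M2 A := by
  obtain ⟨e, he⟩ := h
  obtain ⟨⟨a, b, c, habc⟩, hspan⟩ := (isMinimalObstruction_M2_iff B).1 hB
  refine (isMinimalObstruction_M2_iff A).2 ⟨⟨e.symm a, e.symm b, e.symm c, ?_⟩, ?_⟩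
  · rwa [← isTwoWalk_equiv_iff he, e.apply_symm_apply, e.apply_symm_apply, e.apply_symm_apply]
  · intro u v w huvw
    have hspan' := congrArg (e.symm '' ·) (hspan _ _ _ ((isTwoWalk_equiv_iff he).2 huvw))
    simpa [Set.image_insert_eq, Set.image_univ_of_surjective e.symm.surjective] using hspan'

theorem isMinimalObstruction_M2_digon : IsMinimalObstruction M2 Digon := by
  simp only [isMinimalObstruction_M2_iff, IsTwoWalk, Set.eq_univ_iff_forall, Set.mem_insert_iff,
    Set.mem_singleton_iff, Digon]
  decide

theorem isMinimalObstruction_M2_dirPath2 : IsMinimalObstruction M2 DirPath2 := by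
  simp only [isMinimalObstruction_M2_iff, IsTwoWalk, Set.eq_univ_iff_forall, Set.mem_insert_iff,
    Set.mem_singleton_iff, DirPath2]
  decide

theorem isMinimalObstruction_M2_dirC3 : IsMinimalObstruction M2 DirC3 := by
  simp only [isMinimalObstruction_M2_iff, IsTwoWalk, Set.eq_univ_iff_forall, Set.mem_insert_iff,
    Set.mem_singleton_iff, DirC3]
  decide

theorem isMinimalObstruction_M2_transTour3 : IsMinimalObstruction M2 TransTour3 := by
  simp only [isMinimalObstruction_M2_iff, IsTwoWalk, Set.eq_univ_iff_forall, Set.mem_insert_iff,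
    Set.mem_singleton_iff, TransTour3]
  decide

section Classification

variable {V : Type*} {A : V → V → Prop}

theorem digraphIso_of_bijective {W : Type*} {B : W → W → Prop} (g : W → V)
    (hg : Function.Bijective g) (h : ∀ i j, B i j ↔ A (g i) (g j)) : DigraphIso A B := by
  refine ⟨(Equiv.ofBijective g hg).symm, fun x y => ?_⟩
  obtain ⟨i, rfl⟩ := hg.2 x
  obtain ⟨j, rfl⟩ := hg.2 y
  simp only [h, Equiv.ofBijective_symm_apply_apply]

theorem digraphIso_digon_of_span (hA : ∀ x, ¬ A x x) {u v : V} (huv : u ≠ v) (h₁ : A u v)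
    (h₂ : A v u) (hspan : ({u, v} : Set V) = Set.univ) : DigraphIso A Digon := by
  refine digraphIso_of_bijective ![u, v] ⟨fun i j hij => ?_, fun x => ?_⟩ fun i j => ?_
  · fin_cases i <;> fin_cases j <;> simp_all
  · rcases hspan.symm ▸ Set.mem_univ x with rfl | rfl
    exacts [⟨0, rfl⟩, ⟨1, rfl⟩]
  · fin_cases i <;> fin_cases j <;> simp [Digon, *]

theorem digraphIso_of_span_three (hA : ∀ x, ¬ A x x) {u v w : V} (huv : u ≠ v) (hvw : v ≠ w)
    (huw : u ≠ w) (hspan : ({u, v, w} : Set V) = Set.univ) (h₁ : A u v) (h₂ : A v w)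
    (hvu : ¬ A v u) (hwv : ¬ A w v) (hdigon : ¬ (A u w ∧ A w u)) :
    DigraphIso A DirPath2 ∨ DigraphIso A DirC3 ∨ DigraphIso A TransTour3 := by
  have hbij : Function.Bijective ![u, v, w] := by
    refine ⟨fun i j hij => ?_, fun x => ?_⟩
    · fin_cases i <;> fin_cases j <;> simp_all
    · rcases hspan.symm ▸ Set.mem_univ x with rfl | rfl | rfl
      exacts [⟨0, rfl⟩, ⟨1, rfl⟩, ⟨2, rfl⟩]
  by_cases huw' : A u w <;> by_cases hwu : A w u
  · exact absurd ⟨huw', hwu⟩ hdigon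
  · refine .inr (.inr (digraphIso_of_bijective _ hbij fun i j => ?_))
    fin_cases i <;> fin_cases j <;> simp [TransTour3, *]
  · refine .inr (.inl (digraphIso_of_bijective _ hbij fun i j => ?_))
    fin_cases i <;> fin_cases j <;> simp [DirC3, *]
  · refine .inl (digraphIso_of_bijective _ hbij fun i j => ?_)
    fin_cases i <;> fin_cases j <;> simp [DirPath2, *]

theorem digraphIso_of_isTwoWalk_of_span (hA : ∀ x, ¬ A x x) {u v w : V}
    (huvw : IsTwoWalk A u v w)
    (hspan : ∀ a b c, IsTwoWalk A a b c → ({a, b, c} : Set V) = Set.univ) :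
    DigraphIso A Digon ∨ DigraphIso A DirPath2 ∨ DigraphIso A DirC3 ∨
      DigraphIso A TransTour3 := by
  obtain ⟨huv, hvw, h₁, h₂⟩ := huvw
  by_cases huw : u = w
  · subst huw
    refine .inl (digraphIso_digon_of_span hA huv h₁ h₂ ?_)
    rw [Set.pair_comm]
    simpa using hspan u v u ⟨huv, hvw, h₁, h₂⟩
  · have hmiss : ∀ a b c x, IsTwoWalk A a b c → x ≠ a → x ≠ b → x ≠ c → False := by
      intro a b c x habc hxa hxb hxc
      have hx : x ∈ ({a, b, c} : Set V) := hspan a b c habc ▸ Set.mem_univ x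
      rcases hx with rfl | rfl | rfl <;> contradiction
    refine .inr (digraphIso_of_span_three hA huv hvw huw (hspan u v w ⟨huv, hvw, h₁, h₂⟩) h₁ h₂
      ?_ ?_ ?_)
    · exact fun hvu => hmiss u v u w ⟨huv, huv.symm, h₁, hvu⟩ (Ne.symm huw) hvw.symm (Ne.symm huw)
    · exact fun hwv => hmiss v w v u ⟨hvw, hvw.symm, h₂, hwv⟩ huv huw huv
    · exact fun ⟨huw', hwu⟩ => hmiss u w u v ⟨huw, Ne.symm huw, huw', hwu⟩ huv.symm hvw huv.symm

end Classification

theorem M2_obstructions_list {V : Type*} [Finite V] (A : V → V → Prop)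
    (hA : Irreflexive A) :
    IsMinimalObstruction M2 A ↔
      (DigraphIso A Digon ∨ DigraphIso A DirPath2 ∨
        DigraphIso A DirC3 ∨ DigraphIso A TransTour3) := by
  refine ⟨fun h => ?_, ?_⟩
  · obtain ⟨⟨u, v, w, huvw⟩, hspan⟩ := (isMinimalObstruction_M2_iff A).1 h
    exact digraphIso_of_isTwoWalk_of_span hA huvw hspan
  · rintro (h | h | h | h)
    · exact h.isMinimalObstruction_M2 isMinimalObstruction_M2_digon
    · exact h.isMinimalObstruction_M2 isMinimalObstruction_M2_dirPath2
    · exact h.isMinimalObstruction_M2 isMinimalObstruction_M2_dirC3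
    · exact h.isMinimalObstruction_M2 isMinimalObstruction_M2_transTour3
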